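/- Let n ≥ 4, let φ be a permutation of I = {1,…,n}, and let S_1, S_2 be the two simplices of a special decomposition of 𝔐_{(n,φ)}. Then for each t = 1,2, the blocks of S_t consist of exactly two A-blocks and exactly two B-blocks (in particular n = 4). -/

import Mathlib

abbrev MPoint (n : ℕ) := Fin n ⊕ Fin n

/-- The block `A_i = (A \ {a_i}) ∪ {b_i}`. -/
def Ablock (n : ℕ) (i : Fin n) : Set (MPoint n) :=
  Sum.inl '' {j | j ≠ i} ∪ {Sum.inr i}

/-- The block `B_i = (B \ {b_i}) ∪ {a_{φ(i)}}`. -/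
def Bblock (n : ℕ) (φ : Equiv.Perm (Fin n)) (i : Fin n) : Set (MPoint n) :=
  Sum.inr '' {j | j ≠ i} ∪ {Sum.inl (φ i)}

def ABlocks (n : ℕ) : Set (Set (MPoint n)) := Set.range (Ablock n)

def BBlocks (n : ℕ) (φ : Equiv.Perm (Fin n)) : Set (Set (MPoint n)) := Set.range (Bblock n φ)

/-- The blocks of the Möbius `n`-pair `𝔐_{(n,φ)}`; its point set is all of `MPoint n`. -/
def MBlocks (n : ℕ) (φ : Equiv.Perm (Fin n)) : Set (Set (MPoint n)) :=
  ABlocks n ∪ BBlocks n φ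

/-- A "simplex" of a decomposition: a pair (points, blocks). -/
abbrev MSimplex (n : ℕ) := Set (MPoint n) × Set (Set (MPoint n))

def SimplexA (n : ℕ) : MSimplex n := (Set.range Sum.inl, ABlocks n)

def SimplexB (n : ℕ) (φ : Equiv.Perm (Fin n)) : MSimplex n := (Set.range Sum.inr, BBlocks n φ)

/-- A decomposition of 𝔐_{(n,φ)} into two complementary mutually inscribed n-simplices. -/
def IsDecomp (n : ℕ) (φ : Equiv.Perm (Fin n)) (S₁ S₂ : MSimplex n) : Prop :=
  S₁.1 ∪ S₂.1 = Set.univ ∧ Disjoint S₁.1 S₂.1 ∧ S₁.1.ncard = n ∧ S₂.1.ncard = n ∧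
  S₁.2 ∪ S₂.2 = MBlocks n φ ∧ Disjoint S₁.2 S₂.2 ∧ S₁.2.ncard = n ∧ S₂.2.ncard = n ∧
  (∀ l ∈ S₁.2, (l ∩ S₁.1).ncard = n - 1 ∧ (l ∩ S₂.1).ncard = 1) ∧
  (∀ l ∈ S₂.2, (l ∩ S₂.1).ncard = n - 1 ∧ (l ∩ S₁.1).ncard = 1) ∧
  (∀ p ∈ S₁.1, {l ∈ S₁.2 | p ∈ l}.ncard = n - 1 ∧ {l ∈ S₂.2 | p ∈ l}.ncard = 1) ∧
  (∀ p ∈ S₂.1, {l ∈ S₂.2 | p ∈ l}.ncard = n - 1 ∧ {l ∈ S₁.2 | p ∈ l}.ncard = 1)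

/-- A special decomposition: one in which both simplices differ from S_A and S_B. -/
def IsSpecialDecomp (n : ℕ) (φ : Equiv.Perm (Fin n)) (S₁ S₂ : MSimplex n) : Prop :=
  IsDecomp n φ S₁ S₂ ∧
  S₁ ≠ SimplexA n ∧ S₁ ≠ SimplexB n φ ∧ S₂ ≠ SimplexA n ∧ S₂ ≠ SimplexB n φ

/-!
If all blocks of one simplex of a decomposition were A-blocks, each of its points would lie on
`n - 1 ≥ 2` of them; this excludes every `b_i`, which lies on the single A-block `A_i`, so the
simplex would be `S_A`. Hence in a special decomposition each `L_t` contains an A-block and a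
B-block. An A-block `A_i ∈ L_1` contains every `a_j` with `j ≠ i` but only one point of `P_2`,
so `P_2` contains at most two points of `A`, and contains `a_i` as soon as it contains two.
The same holds for `B` and with the simplices exchanged; as the four counts `|A ∩ P_t|`,
`|B ∩ P_t|` add up to `2n`, we get `n = 4` with all counts equal to `2`. Now `A_i ∈ L_1` forces
`a_i ∈ P_2`, so `L_1` has at most two A-blocks; likewise for the other three block counts, which
add up to `2n = 8` as well.
-/

open Set Function

section Counting

variable {ι α : Type*}

theorem ncard_preimage_add_ncard_preimage [Finite ι] {s t : Set α} (hst : Disjoint s t)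
    {g : ι → α} (hg : range g ⊆ s ∪ t) :
    (g ⁻¹' s).ncard + (g ⁻¹' t).ncard = Nat.card ι := by
  have hcompl : g ⁻¹' t = (g ⁻¹' s)ᶜ := by
    ext i
    have := hg (mem_range_self i)
    exact ⟨fun ht hs => hst.ne_of_mem hs ht rfl, fun hs => this.resolve_left hs⟩
  rw [hcompl, ncard_add_ncard_compl]

theorem ncard_inter_range_of_injective {f : ι → α} (hf : Injective f) (s : Set α) :
    (s ∩ range f).ncard = (f ⁻¹' s).ncard := by
  rw [← image_preimage_eq_inter_range, ncard_image_of_injective _ hf]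

theorem subset_of_ncard_blocks_le_one {P X : Set α} {L : Set (Set α)} {n : ℕ} (hn : 3 ≤ n)
    (hP : ∀ p ∈ P, {l ∈ L | p ∈ l}.ncard = n - 1)
    (hX : ∀ p ∉ X, {l ∈ L | p ∈ l}.ncard ≤ 1) : P ⊆ X := by
  intro p hp
  by_contra hpX
  have := hX p hpX
  rw [hP p hp] at this
  omega

variable [Finite α] {f : ι → α} {l Q : Set α} {i : ι}

theorem ncard_preimage_sdiff_singleton_le_one (hf : Injective f) (hl : ∀ j ≠ i, f j ∈ l)
    (hlQ : (l ∩ Q).ncard ≤ 1) : (f ⁻¹' Q \ {i}).ncard ≤ 1 := by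
  have hsub : f '' (f ⁻¹' Q \ {i}) ⊆ l ∩ Q := by
    rintro _ ⟨j, ⟨hjQ, hji⟩, rfl⟩
    exact ⟨hl j hji, hjQ⟩
  rw [← ncard_image_of_injective _ hf]
  exact (ncard_le_ncard hsub).trans hlQ

theorem ncard_preimage_le_two (hf : Injective f) (hl : ∀ j ≠ i, f j ∈ l)
    (hlQ : (l ∩ Q).ncard ≤ 1) : (f ⁻¹' Q).ncard ≤ 2 := by
  have := ncard_preimage_sdiff_singleton_le_one hf hl hlQ
  have := pred_ncard_le_ncard_sdiff_singleton (f ⁻¹' Q) i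
  omega

theorem mem_of_two_le_ncard_preimage (hf : Injective f) (hl : ∀ j ≠ i, f j ∈ l)
    (hlQ : (l ∩ Q).ncard ≤ 1) (h2 : 2 ≤ (f ⁻¹' Q).ncard) : f i ∈ Q := by
  by_contra hi
  have := ncard_preimage_sdiff_singleton_le_one hf hl hlQ
  rw [sdiff_singleton_eq_self (show i ∉ f ⁻¹' Q from hi)] at this
  omega

end Counting

section MoebiusPair

variable {n : ℕ} {φ : Equiv.Perm (Fin n)} {i j : Fin n}

@[simp] theorem inl_mem_Ablock : Sum.inl j ∈ Ablock n i ↔ j ≠ i := by simp [Ablock]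

@[simp] theorem inr_mem_Ablock : Sum.inr j ∈ Ablock n i ↔ j = i := by simp [Ablock]

@[simp] theorem inl_mem_Bblock : Sum.inl j ∈ Bblock n φ i ↔ j = φ i := by simp [Bblock]

@[simp] theorem inr_mem_Bblock : Sum.inr j ∈ Bblock n φ i ↔ j ≠ i := by simp [Bblock]

theorem Ablock_injective : Injective (Ablock n) := fun _ _ hij =>
  inr_mem_Ablock.mp (hij ▸ inr_mem_Ablock.mpr rfl)

theorem Bblock_injective : Injective (Bblock n φ) := fun i j hij => by
  by_contra hne
  have h : Sum.inr j ∈ Bblock n φ i := inr_mem_Bblock.mpr (Ne.symm hne)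
  exact inr_mem_Bblock.mp (hij ▸ h) rfl

theorem eq_SimplexA_of_subset_ABlocks (hn : 3 ≤ n) {S : MSimplex n} (hP : S.1.ncard = n)
    (hL : S.2.ncard = n) (hdeg : ∀ p ∈ S.1, {l ∈ S.2 | p ∈ l}.ncard = n - 1)
    (hsub : S.2 ⊆ ABlocks n) : S = SimplexA n := by
  have hPsub : S.1 ⊆ range Sum.inl := by
    refine subset_of_ncard_blocks_le_one hn hdeg fun p hp => ?_
    obtain ⟨i, rfl⟩ : ∃ i, p = Sum.inr i := by cases p <;> simp_all
    -- `b_i` lies on no A-block but `A_i`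
    refine (ncard_le_ncard (t := {Ablock n i}) ?_).trans (ncard_singleton _).le
    rintro _ ⟨hl, hil⟩
    obtain ⟨k, rfl⟩ := hsub hl
    rw [inr_mem_Ablock.mp hil, mem_singleton_iff]
  refine Prod.ext (eq_of_subset_of_ncard_le hPsub ?_) (eq_of_subset_of_ncard_le hsub ?_)
  · rw [hP, SimplexA, ncard_range_of_injective Sum.inl_injective, Nat.card_fin]
  · rw [hL, SimplexA, ABlocks, ncard_range_of_injective Ablock_injective, Nat.card_fin]

theorem eq_SimplexB_of_subset_BBlocks (hn : 3 ≤ n) {S : MSimplex n} (hP : S.1.ncard = n)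
    (hL : S.2.ncard = n) (hdeg : ∀ p ∈ S.1, {l ∈ S.2 | p ∈ l}.ncard = n - 1)
    (hsub : S.2 ⊆ BBlocks n φ) : S = SimplexB n φ := by
  have hPsub : S.1 ⊆ range Sum.inr := by
    refine subset_of_ncard_blocks_le_one hn hdeg fun p hp => ?_
    obtain ⟨j, rfl⟩ : ∃ j, p = Sum.inl j := by cases p <;> simp_all
    -- `a_j` lies on no B-block but `B_{φ⁻¹ j}`
    refine (ncard_le_ncard (t := {Bblock n φ (φ.symm j)}) ?_).trans (ncard_singleton _).le
    rintro _ ⟨hl, hjl⟩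
    obtain ⟨k, rfl⟩ := hsub hl
    rw [inl_mem_Bblock.mp hjl, Equiv.symm_apply_apply, mem_singleton_iff]
  refine Prod.ext (eq_of_subset_of_ncard_le hPsub ?_) (eq_of_subset_of_ncard_le hsub ?_)
  · rw [hP, SimplexB, ncard_range_of_injective Sum.inr_injective, Nat.card_fin]
  · rw [hL, SimplexB, BBlocks, ncard_range_of_injective Bblock_injective, Nat.card_fin]

namespace IsDecomp

variable {S₁ S₂ : MSimplex n}

theorem symm (h : IsDecomp n φ S₁ S₂) : IsDecomp n φ S₂ S₁ := by
  obtain ⟨hPu, hPd, hP₁, hP₂, hLu, hLd, hL₁, hL₂, hb₁, hb₂, hp₁, hp₂⟩ := h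
  exact ⟨union_comm S₁.1 _ ▸ hPu, hPd.symm, hP₂, hP₁, union_comm S₁.2 _ ▸ hLu, hLd.symm, hL₂, hL₁,
    hb₂, hb₁, hp₂, hp₁⟩

theorem ncard_inter_snd {l : Set (MPoint n)} (h : IsDecomp n φ S₁ S₂) (hl : l ∈ S₁.2) :
    (l ∩ S₂.1).ncard = 1 := by
  obtain ⟨-, -, -, -, -, -, -, -, hb₁, -⟩ := h
  exact (hb₁ l hl).2

theorem exists_Ablock_mem (h : IsDecomp n φ S₁ S₂) (hn : 3 ≤ n) (hne : S₁ ≠ SimplexB n φ) :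
    ∃ i, Ablock n i ∈ S₁.2 := by
  obtain ⟨-, -, hP₁, -, hLu, -, hL₁, -, -, -, hp₁, -⟩ := h
  by_contra! hA
  refine hne (eq_SimplexB_of_subset_BBlocks hn hP₁ hL₁ (fun p hp => (hp₁ p hp).1) fun l hl => ?_)
  obtain ⟨i, rfl⟩ | hB : l ∈ MBlocks n φ := hLu ▸ Or.inl hl
  · exact absurd hl (hA i)
  · exact hB

theorem exists_Bblock_mem (h : IsDecomp n φ S₁ S₂) (hn : 3 ≤ n) (hne : S₁ ≠ SimplexA n) :
    ∃ i, Bblock n φ i ∈ S₁.2 := by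
  obtain ⟨-, -, hP₁, -, hLu, -, hL₁, -, -, -, hp₁, -⟩ := h
  by_contra! hB
  refine hne (eq_SimplexA_of_subset_ABlocks hn hP₁ hL₁ (fun p hp => (hp₁ p hp).1) fun l hl => ?_)
  obtain hA | ⟨i, rfl⟩ : l ∈ MBlocks n φ := hLu ▸ Or.inl hl
  · exact hA
  · exact absurd hl (hB i)

theorem ncard_preimage_fst_add (h : IsDecomp n φ S₁ S₂) (g : Fin n → MPoint n) :
    (g ⁻¹' S₁.1).ncard + (g ⁻¹' S₂.1).ncard = n := by
  obtain ⟨hPu, hPd, -⟩ := h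
  rw [ncard_preimage_add_ncard_preimage hPd (hPu ▸ subset_univ _), Nat.card_fin]

theorem ncard_preimage_snd_add (h : IsDecomp n φ S₁ S₂) {g : Fin n → Set (MPoint n)}
    (hg : range g ⊆ MBlocks n φ) : (g ⁻¹' S₁.2).ncard + (g ⁻¹' S₂.2).ncard = n := by
  obtain ⟨-, -, -, -, hLu, hLd, -⟩ := h
  rw [ncard_preimage_add_ncard_preimage hLd (hLu ▸ hg), Nat.card_fin]

theorem preimage_Ablock_subset (h : IsDecomp n φ S₁ S₂) (h2 : 2 ≤ (Sum.inl ⁻¹' S₂.1).ncard) :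
    Ablock n ⁻¹' S₁.2 ⊆ Sum.inl ⁻¹' S₂.1 := fun _ hi =>
  mem_of_two_le_ncard_preimage Sum.inl_injective (fun _ => inl_mem_Ablock.mpr)
    (h.ncard_inter_snd hi).le h2

theorem preimage_Bblock_subset (h : IsDecomp n φ S₁ S₂) (h2 : 2 ≤ (Sum.inr ⁻¹' S₂.1).ncard) :
    Bblock n φ ⁻¹' S₁.2 ⊆ Sum.inr ⁻¹' S₂.1 := fun _ hi =>
  mem_of_two_le_ncard_preimage Sum.inr_injective (fun _ => inr_mem_Bblock.mpr)
    (h.ncard_inter_snd hi).le h2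

end IsDecomp

namespace IsSpecialDecomp

variable {S₁ S₂ : MSimplex n}

theorem symm (h : IsSpecialDecomp n φ S₁ S₂) : IsSpecialDecomp n φ S₂ S₁ :=
  ⟨h.1.symm, h.2.2.2.1, h.2.2.2.2, h.2.1, h.2.2.1⟩

theorem ncard_preimage_snd_le_two (h : IsSpecialDecomp n φ S₁ S₂) (hn : 3 ≤ n) :
    (Sum.inl ⁻¹' S₂.1).ncard ≤ 2 ∧ (Sum.inr ⁻¹' S₂.1).ncard ≤ 2 := by
  obtain ⟨hd, hneA, hneB, -, -⟩ := h
  obtain ⟨i, hi⟩ := hd.exists_Ablock_mem hn hneB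
  obtain ⟨j, hj⟩ := hd.exists_Bblock_mem hn hneA
  exact ⟨ncard_preimage_le_two Sum.inl_injective (fun _ => inl_mem_Ablock.mpr)
      (hd.ncard_inter_snd hi).le,
    ncard_preimage_le_two Sum.inr_injective (fun _ => inr_mem_Bblock.mpr)
      (hd.ncard_inter_snd hj).le⟩

end IsSpecialDecomp

end MoebiusPair

/-- In a special decomposition each simplex has exactly two A-blocks and two B-blocks
(in particular n = 4). -/
theorem stmt6 (n : ℕ) (hn : 4 ≤ n) (φ : Equiv.Perm (Fin n)) (S₁ S₂ : MSimplex n)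
    (h : IsSpecialDecomp n φ S₁ S₂) :
    n = 4 ∧
    (S₁.2 ∩ ABlocks n).ncard = 2 ∧ (S₁.2 ∩ BBlocks n φ).ncard = 2 ∧
    (S₂.2 ∩ ABlocks n).ncard = 2 ∧ (S₂.2 ∩ BBlocks n φ).ncard = 2 := by
  have hn3 : 3 ≤ n := by omega
  obtain ⟨ha₂, hb₂⟩ := h.ncard_preimage_snd_le_two hn3
  obtain ⟨ha₁, hb₁⟩ := h.symm.ncard_preimage_snd_le_two hn3
  have hd := h.1
  have ha := hd.ncard_preimage_fst_add Sum.inl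
  have hb := hd.ncard_preimage_fst_add Sum.inr
  have hn4 : n = 4 := by omega
  have hA₁ := ncard_le_ncard (hd.preimage_Ablock_subset (by omega))
  have hB₁ := ncard_le_ncard (hd.preimage_Bblock_subset (by omega))
  have hA₂ := ncard_le_ncard (hd.symm.preimage_Ablock_subset (by omega))
  have hB₂ := ncard_le_ncard (hd.symm.preimage_Bblock_subset (by omega))
  have hA := hd.ncard_preimage_snd_add (g := Ablock n) subset_union_left
  have hB := hd.ncard_preimage_snd_add (g := Bblock n φ) subset_union_right
  simp only [ABlocks, BBlocks, ncard_inter_range_of_injective Ablock_injective,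
    ncard_inter_range_of_injective Bblock_injective]
  omega
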